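/- Let S be a processor symmetric and location symmetric memory system, let Ω be a simple witness, and let τ be an unambiguous trace of S(n,m,v). If the constraint graph G(Ω)(τ) has a k-nice cycle, then there is an unambiguous trace τ'' of S(n,m,v) such that G(Ω)(τ'') has a canonical k-nice cycle. -/

import Mathlib

/-- A memory operation: read or write. -/
inductive MemOp : Type
  | R : MemOp
  | W : MemOp
deriving DecidableEq

/-- A memory event ⟨op, proc, loc, data⟩. -/
structure MemEvent : Type where
  op : MemOp
  proc : ℕ
  loc : ℕ
  data : ℕ
deriving DecidableEq

instance : Inhabited MemEvent := ⟨⟨MemOp.R, 1, 1, 0⟩⟩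

/-- A trace is a finite sequence of memory events (1-indexed via `ev`). -/
abbrev MTrace := List MemEvent

/-- The x-th event of a trace (1-indexed). -/
def ev (τ : MTrace) (x : ℕ) : MemEvent := τ.getD (x - 1) default

/-- dom(τ) = {1, …, |τ|}. -/
def Dom (τ : MTrace) : Set ℕ := {x | 1 ≤ x ∧ x ≤ τ.length}

/-- P(τ,i): indices of events of processor i. -/
def Pset (τ : MTrace) (i : ℕ) : Set ℕ := {x | x ∈ Dom τ ∧ (ev τ x).proc = i}

/-- L(τ,j): indices of events to location j. -/
def Lset (τ : MTrace) (j : ℕ) : Set ℕ := {x | x ∈ Dom τ ∧ (ev τ x).loc = j}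

/-- L^w(τ,j): indices of write events to location j. -/
def Lw (τ : MTrace) (j : ℕ) : Set ℕ := {x | x ∈ Lset τ j ∧ (ev τ x).op = MemOp.W}

/-- L^r(τ,j): indices of read events to location j. -/
def Lr (τ : MTrace) (j : ℕ) : Set ℕ := {x | x ∈ Lset τ j ∧ (ev τ x).op = MemOp.R}

/-- A trace is unambiguous if every write event has a nonzero data value distinct
from that of every other write event to the same location. -/
def Unambiguous (τ : MTrace) : Prop :=
  ∀ j, ∀ x ∈ Lw τ j, (ev τ x).data ≠ 0 ∧
    ∀ y ∈ Lw τ j, y ≠ x → (ev τ y).data ≠ (ev τ x).data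

/-- A trace is causal if the data value of every read event is 0 or equals the data
value of some write event to the same location. -/
def Causal (τ : MTrace) : Prop :=
  ∀ j, ∀ x ∈ Lr τ j, (ev τ x).data = 0 ∨ ∃ y ∈ Lw τ j, (ev τ y).data = (ev τ x).data

/-- ⟨x,y⟩ ∈ M(τ,i): the total order on P(τ,i) given by index order. -/
def Mrel (τ : MTrace) (i : ℕ) (x y : ℕ) : Prop :=
  x ∈ Pset τ i ∧ y ∈ Pset τ i ∧ x < y

/-- A sequence of memory events (given by its length and 1-indexed access function)
is serial: each event's data value equals that of the latest write to the same
location at an index no larger than its own, and equals 0 if no such write exists. -/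
def SerialFn (len : ℕ) (e : ℕ → MemEvent) : Prop :=
  ∀ u, 1 ≤ u → u ≤ len →
    ((∀ k, 1 ≤ k → k ≤ u → ¬((e k).op = MemOp.W ∧ (e k).loc = (e u).loc)) →
       (e u).data = 0) ∧
    (∀ k, 1 ≤ k → k ≤ u → (e k).op = MemOp.W → (e k).loc = (e u).loc →
       (∀ k', k < k' → k' ≤ u → ¬((e k').op = MemOp.W ∧ (e k').loc = (e u).loc)) →
       (e u).data = (e k).data)

/-- f (with inverse g) is a permutation of {1,…,|τ|} satisfying conditions C1 and C2. -/
def IsSCWitness (τ : MTrace) (f g : ℕ → ℕ) : Prop :=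
  (∀ u ∈ Dom τ, f u ∈ Dom τ) ∧
  (∀ u ∈ Dom τ, g u ∈ Dom τ) ∧
  (∀ u ∈ Dom τ, g (f u) = u) ∧
  (∀ u ∈ Dom τ, f (g u) = u) ∧
  (∀ i u v, Mrel τ i u v → f u < f v) ∧
  SerialFn τ.length (fun x => ev τ (g x))

/-- A trace is sequentially consistent if some permutation satisfies C1 and C2. -/
def SeqConsistent (τ : MTrace) : Prop := ∃ f g, IsSCWitness τ f g

/-- A witness assigns to each trace and location a strict total order on L^w(τ,j). -/
def IsWitness (Ω : MTrace → ℕ → ℕ → ℕ → Prop) : Prop :=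
  ∀ τ j,
    (∀ x y, Ω τ j x y → x ∈ Lw τ j ∧ y ∈ Lw τ j) ∧
    (∀ x, ¬ Ω τ j x x) ∧
    (∀ x y z, Ω τ j x y → Ω τ j y z → Ω τ j x z) ∧
    (∀ x y, x ∈ Lw τ j → y ∈ Lw τ j → x ≠ y → Ω τ j x y ∨ Ω τ j y x)

/-- A witness is simple if it orders the writes to each location by index order. -/
def IsSimple (Ω : MTrace → ℕ → ℕ → ℕ → Prop) : Prop :=
  ∀ τ j x y, Ω τ j x y ↔ (x ∈ Lw τ j ∧ y ∈ Lw τ j ∧ x < y)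

/-- ⟨x,y⟩ ∈ Ω^e(τ,j): the extension of the witness order to all events to location j. -/
def OmegaE (Ω : MTrace → ℕ → ℕ → ℕ → Prop) (τ : MTrace) (j x y : ℕ) : Prop :=
  x ∈ Lset τ j ∧ y ∈ Lset τ j ∧
  (((ev τ x).data = (ev τ y).data ∧ (ev τ x).op = MemOp.W ∧ (ev τ y).op = MemOp.R) ∨
   ((ev τ x).data = 0 ∧ (ev τ y).data ≠ 0) ∨
   (∃ a b, a ∈ Lw τ j ∧ b ∈ Lw τ j ∧ Ω τ j a b ∧
      (ev τ a).data = (ev τ x).data ∧ (ev τ b).data = (ev τ y).data))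

/-- Edge of the constraint graph G(Ω)(τ): union of the M(τ,i) and the Ω^e(τ,j). -/
def GEdge (Ω : MTrace → ℕ → ℕ → ℕ → Prop) (τ : MTrace) (x y : ℕ) : Prop :=
  (∃ i, Mrel τ i x y) ∨ (∃ j, OmegaE Ω τ j x y)

/-- The constraint graph G(Ω)(τ) has a cycle. -/
def HasCycle (Ω : MTrace → ℕ → ℕ → ℕ → Prop) (τ : MTrace) : Prop :=
  ∃ x, Relation.TransGen (GEdge Ω τ) x x

/-- The constraint graph G(Ω)(τ) is acyclic. -/
def Acyclic (Ω : MTrace → ℕ → ℕ → ℕ → Prop) (τ : MTrace) : Prop :=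
  ¬ HasCycle Ω τ

/-- All events of the trace have processor in {1,…,n} and location in {1,…,m}. -/
def InRange (n m : ℕ) (τ : MTrace) : Prop :=
  ∀ e ∈ τ, 1 ≤ e.proc ∧ e.proc ≤ n ∧ 1 ≤ e.loc ∧ e.loc ≤ m

/-- All data values in the trace lie in {0,…,v}. -/
def DataBounded (v : ℕ) (τ : MTrace) : Prop := ∀ e ∈ τ, e.data ≤ v

/-- A memory system with n processors and m locations: for each v ≥ 1, a set S(n,m,v)
of traces whose processors, locations, and data values are in range. -/
structure MemSystem (n m : ℕ) : Type where
  S : ℕ → Set MTrace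
  wf : ∀ v, 1 ≤ v → ∀ τ ∈ S v, InRange n m τ ∧ DataBounded v τ

/-- S(n,m): the union of the S(n,m,v) over v ≥ 1. -/
def MemSystem.traces {n m : ℕ} (M : MemSystem n m) : Set MTrace :=
  {τ | ∃ v, 1 ≤ v ∧ τ ∈ M.S v}

/-- A renaming function λ with λ(j,0) = 0 for every location j. -/
def IsRenaming (lam : ℕ → ℕ → ℕ) : Prop := ∀ j, lam j 0 = 0

/-- λ^d: rename the data value of each event according to its location. -/
def renameD (lam : ℕ → ℕ → ℕ) (τ : MTrace) : MTrace :=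
  τ.map fun e => { e with data := lam e.loc e.data }

/-- The memory system is data independent: a trace is in S(n,m,v) iff it is obtained
from an unambiguous trace of S(n,m) by a renaming function with values in {0,…,v}. -/
def DataIndependent {n m : ℕ} (M : MemSystem n m) : Prop :=
  ∀ v, 1 ≤ v → ∀ τ, τ ∈ M.S v ↔
    ∃ τ' lam, τ' ∈ M.traces ∧ Unambiguous τ' ∧ IsRenaming lam ∧
      (∀ j d, lam j d ≤ v) ∧ τ = renameD lam τ'

/-- λ^p: rename the processor of each event. -/
def renameP (lam : ℕ → ℕ) (τ : MTrace) : MTrace :=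
  τ.map fun e => { e with proc := lam e.proc }

/-- λ^l: rename the location of each event. -/
def renameL (lam : ℕ → ℕ) (τ : MTrace) : MTrace :=
  τ.map fun e => { e with loc := lam e.loc }

/-- λ is a permutation of {1,…,n}. -/
def PermOn (n : ℕ) (lam : ℕ → ℕ) : Prop :=
  Set.BijOn lam (Set.Icc 1 n) (Set.Icc 1 n)

/-- The memory system is processor symmetric. -/
def ProcSymmetric {n m : ℕ} (M : MemSystem n m) : Prop :=
  ∀ lam, PermOn n lam → ∀ v τ, τ ∈ M.S v → renameP lam τ ∈ M.S v

/-- The memory system is location symmetric. -/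
def LocSymmetric {n m : ℕ} (M : MemSystem n m) : Prop :=
  ∀ lam, PermOn m lam → ∀ v τ, τ ∈ M.S v → renameL lam τ ∈ M.S v

/-- x ⊕ 1 in the cyclic group {1,…,k} with identity k. -/
def cyc (k x : ℕ) : ℕ := if x = k then 1 else x + 1

/-- A k-nice cycle u_1,v_1,…,u_k,v_k in G(Ω)(τ): distinct vertices; each ⟨u_x,v_x⟩
is a processor edge, each ⟨v_x,u_{x⊕1}⟩ a location edge; no processor (resp.
location) contributes two edges. -/
def NiceCycle (Ω : MTrace → ℕ → ℕ → ℕ → Prop) (τ : MTrace) (k : ℕ)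
    (u v : ℕ → ℕ) : Prop :=
  1 ≤ k ∧
  (∀ x ∈ Set.Icc 1 k, ∀ y ∈ Set.Icc 1 k, x ≠ y → u x ≠ u y) ∧
  (∀ x ∈ Set.Icc 1 k, ∀ y ∈ Set.Icc 1 k, x ≠ y → v x ≠ v y) ∧
  (∀ x ∈ Set.Icc 1 k, ∀ y ∈ Set.Icc 1 k, u x ≠ v y) ∧
  (∀ x ∈ Set.Icc 1 k, ∃ i, Mrel τ i (u x) (v x)) ∧
  (∀ x ∈ Set.Icc 1 k, ∃ j, OmegaE Ω τ j (v x) (u (cyc k x))) ∧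
  (∀ x ∈ Set.Icc 1 k, ∀ y ∈ Set.Icc 1 k, x ≠ y → ∀ i,
     Mrel τ i (u x) (v x) → ¬ Mrel τ i (u y) (v y)) ∧
  (∀ x ∈ Set.Icc 1 k, ∀ y ∈ Set.Icc 1 k, x ≠ y → ∀ j,
     OmegaE Ω τ j (v x) (u (cyc k x)) → ¬ OmegaE Ω τ j (v y) (u (cyc k y)))

/-- A canonical k-nice cycle: a k-nice cycle whose processor edges are in M(τ,x) and
whose location edges are in Ω^e(τ,x⊕1), for x = 1,…,k. -/
def CanonicalNiceCycle (Ω : MTrace → ℕ → ℕ → ℕ → Prop) (τ : MTrace) (k : ℕ)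
    (u v : ℕ → ℕ) : Prop :=
  NiceCycle Ω τ k u v ∧
  (∀ x ∈ Set.Icc 1 k, Mrel τ x (u x) (v x)) ∧
  (∀ x ∈ Set.Icc 1 k, OmegaE Ω τ (cyc k x) (v x) (u (cyc k x)))

/-- The trace satisfies the automaton Constrain_k(j). -/
def ConstrainK (k j : ℕ) (τ : MTrace) : Prop :=
  (j ≤ k →
    (∀ x ∈ Lw τ j, (ev τ x).data ≤ 2) ∧
    (∀ x ∈ Lw τ j, ∀ y ∈ Lw τ j, (ev τ x).data = 1 → (ev τ y).data = 1 → x = y) ∧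
    (∀ x ∈ Lw τ j, ∀ y ∈ Lw τ j, (ev τ x).data = 0 → (ev τ y).data ≠ 0 → x < y) ∧
    (∀ y ∈ Lw τ j, (ev τ y).data = 2 → ∃ x ∈ Lw τ j, (ev τ x).data = 1 ∧ x < y)) ∧
  (k < j → ∀ x ∈ Lw τ j, (ev τ x).data = 0)

/-- The trace satisfies the automaton Check_k(i). -/
def CheckK (k i : ℕ) (τ : MTrace) : Prop :=
  ∃ x ∈ Dom τ, ∃ y ∈ Dom τ, x < y ∧
    (ev τ x).proc = i ∧ (ev τ x).loc = i ∧
    ((ev τ x).data = 1 ∨ (ev τ x).data = 2) ∧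
    (ev τ y).proc = i ∧ (ev τ y).loc = cyc k i ∧
    ((ev τ y).data = 0 ∨ ((ev τ y).op = MemOp.W ∧ (ev τ y).data = 1))
/-!
The processors of the edges ⟨u_x, v_x⟩ of a nice cycle are pairwise distinct, and so are the
locations of the edges ⟨v_x, u_{x⊕1}⟩. Renaming processors by a permutation of {1,…,n} sending the
processor of the x-th edge to x, and locations by a permutation of {1,…,m} sending the location of
the x-th location edge to x ⊕ 1, gives a trace of S(n,m,v) by symmetry. Renaming keeps data values
and the index order of events, so the trace stays unambiguous and, the witness being simple, the
same vertices form a canonical k-nice cycle in it.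
-/

open Set Function Equiv

theorem Equiv.Perm.exists_bijOn_eqOn_of_injOn {α : Type*} {s : Set α} {t : Finset α}
    {f : α → α} (hst : s ⊆ t) (hf : MapsTo f s t) (hf' : InjOn f s) :
    ∃ π : Perm α, BijOn π t t ∧ EqOn π f s := by
  classical
  obtain ⟨g, hg⟩ := Set.MapsTo.exists_equiv_extend_of_card_eq (Fintype.card_coe t)
    (s := {y : t | (y : α) ∈ s}) (f := fun y => f y) (fun y hy => hf hy)
    (fun y hy z hz h => Subtype.ext (hf' hy hz h))
  refine ⟨Perm.ofSubtype g, ?_, fun x hx => ?_⟩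
  · refine (t.finite_toSet.injOn_iff_bijOn_of_mapsTo fun x hx => ?_).1
      (Perm.ofSubtype g).injective.injOn
    exact (Perm.ofSubtype_apply_mem_iff_mem g x).2 hx
  · rw [Perm.ofSubtype_apply_of_mem g (hst hx)]
    exact hg ⟨x, hst hx⟩ hx

theorem Equiv.Perm.exists_bijOn_comp_eqOn {α : Type*} {s : Set α} {t : Finset α}
    {f g : α → α} (hst : s ⊆ t) (hf : MapsTo f s t) (hf' : InjOn f s)
    (hg : MapsTo g s t) (hg' : InjOn g s) :
    ∃ σ : Perm α, BijOn σ t t ∧ ∀ x ∈ s, σ (f x) = g x := by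
  obtain ⟨πf, hπf, hπf_eq⟩ := exists_bijOn_eqOn_of_injOn hst hf hf'
  obtain ⟨πg, hπg, hπg_eq⟩ := exists_bijOn_eqOn_of_injOn hst hg hg'
  refine ⟨πg * πf⁻¹, hπg.comp hπf.perm_inv, fun x hx => ?_⟩
  rw [Perm.mul_apply, ← hπf_eq hx, Perm.inv_eq_iff_eq.2 rfl, hπg_eq hx]

theorem exists_permOn_comp_eqOn {k n : ℕ} {f g : ℕ → ℕ}
    (hf : MapsTo f (Icc 1 k) (Icc 1 n)) (hf' : InjOn f (Icc 1 k))
    (hg : MapsTo g (Icc 1 k) (Icc 1 k)) (hg' : InjOn g (Icc 1 k)) :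
    ∃ σ : Perm ℕ, PermOn n σ ∧ ∀ x ∈ Icc 1 k, σ (f x) = g x := by
  have hkn : k ≤ n := by
    simpa using Finset.card_le_card_of_injOn f (s := Finset.Icc 1 k) (t := Finset.Icc 1 n)
      (by simpa [MapsTo] using hf) (by simpa using hf')
  have hst : Icc 1 k ⊆ Icc 1 n := Icc_subset_Icc_right hkn
  simpa [PermOn] using Perm.exists_bijOn_comp_eqOn (t := Finset.Icc 1 n)
    (by simpa using hst) (by simpa using hf) hf' (by simpa using hg.mono_right hst) hg'

theorem mapsTo_cyc (k : ℕ) : MapsTo (cyc k) (Icc 1 k) (Icc 1 k) := by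
  intro x hx
  simp only [mem_Icc, cyc] at hx ⊢
  split <;> omega

theorem injOn_cyc (k : ℕ) : InjOn (cyc k) (Icc 1 k) := by
  intro x hx y hy h
  simp only [mem_Icc, cyc] at hx hy h
  split at h <;> split at h <;> omega

def MemEvent.relabel (σp σl : ℕ → ℕ) (e : MemEvent) : MemEvent :=
  { e with proc := σp e.proc, loc := σl e.loc }

theorem renameL_renameP (σp σl : ℕ → ℕ) (τ : MTrace) :
    renameL σl (renameP σp τ) = τ.map (MemEvent.relabel σp σl) := by
  simp only [renameL, renameP, List.map_map]
  rfl

theorem dom_map (f : MemEvent → MemEvent) (τ : MTrace) : Dom (τ.map f) = Dom τ := by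
  simp [Dom]

theorem ev_map {f : MemEvent → MemEvent} {τ : MTrace} {x : ℕ} (hx : x ∈ Dom τ) :
    ev (τ.map f) x = f (ev τ x) := by
  have hlt : x - 1 < τ.length := by obtain ⟨h1, h2⟩ := hx; omega
  rw [ev, ev, List.getD_eq_getElem _ _ (by simpa using hlt), List.getD_eq_getElem _ _ hlt,
    List.getElem_map]

theorem ev_mem {τ : MTrace} {x : ℕ} (hx : x ∈ Dom τ) : ev τ x ∈ τ := by
  have hlt : x - 1 < τ.length := by obtain ⟨h1, h2⟩ := hx; omega
  rw [ev, List.getD_eq_getElem _ _ hlt]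
  exact List.getElem_mem hlt

section Relabel

variable {σp σl : ℕ → ℕ} {τ : MTrace}

-- No `x ∈ Dom τ` needed: out of range both sides read the data of the default event.
@[simp]
theorem data_ev_map_relabel (x : ℕ) :
    (ev (τ.map (MemEvent.relabel σp σl)) x).data = (ev τ x).data := by
  simp only [ev, List.getD_eq_getElem?_getD, List.getElem?_map]
  cases τ[x - 1]? <;> rfl

@[simp]
theorem op_ev_map_relabel (x : ℕ) :
    (ev (τ.map (MemEvent.relabel σp σl)) x).op = (ev τ x).op := by
  simp only [ev, List.getD_eq_getElem?_getD, List.getElem?_map]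
  cases τ[x - 1]? <;> rfl

theorem pset_map_relabel (hσp : Injective σp) (i : ℕ) :
    Pset (τ.map (MemEvent.relabel σp σl)) (σp i) = Pset τ i := by
  ext x
  simp only [Pset, dom_map, mem_ofPred_eq]
  exact and_congr_right fun hx => by rw [ev_map hx]; exact hσp.eq_iff

theorem lset_map_relabel (hσl : Injective σl) (j : ℕ) :
    Lset (τ.map (MemEvent.relabel σp σl)) (σl j) = Lset τ j := by
  ext x
  simp only [Lset, dom_map, mem_ofPred_eq]
  exact and_congr_right fun hx => by rw [ev_map hx]; exact hσl.eq_iff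

theorem lw_map_relabel (hσl : Injective σl) (j : ℕ) :
    Lw (τ.map (MemEvent.relabel σp σl)) (σl j) = Lw τ j := by
  simp only [Lw, lset_map_relabel hσl, op_ev_map_relabel]

theorem mrel_map_relabel (hσp : Injective σp) (i a b : ℕ) :
    Mrel (τ.map (MemEvent.relabel σp σl)) (σp i) a b ↔ Mrel τ i a b := by
  simp only [Mrel, pset_map_relabel hσp]

theorem omegaE_map_relabel {Ω : MTrace → ℕ → ℕ → ℕ → Prop} (hS : IsSimple Ω)
    (hσl : Injective σl) (j a b : ℕ) :
    OmegaE Ω (τ.map (MemEvent.relabel σp σl)) (σl j) a b ↔ OmegaE Ω τ j a b := by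
  simp only [OmegaE, hS _ (σl j), hS τ j, lset_map_relabel hσl, lw_map_relabel hσl,
    data_ev_map_relabel, op_ev_map_relabel]

theorem Unambiguous.map_relabel (hU : Unambiguous τ) (hσl : Injective σl) :
    Unambiguous (τ.map (MemEvent.relabel σp σl)) := by
  intro j x hx
  obtain rfl : σl (ev τ x).loc = j := by
    rw [← hx.1.2, ev_map (dom_map _ τ ▸ hx.1.1)]
    rfl
  rw [lw_map_relabel hσl] at hx
  simp only [lw_map_relabel hσl, data_ev_map_relabel]
  exact hU _ x hx

end Relabel

theorem Mrel.proc_eq {τ : MTrace} {i a b : ℕ} (h : Mrel τ i a b) : (ev τ a).proc = i := h.1.2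

theorem OmegaE.loc_eq {Ω : MTrace → ℕ → ℕ → ℕ → Prop} {τ : MTrace} {j a b : ℕ}
    (h : OmegaE Ω τ j a b) : (ev τ a).loc = j := h.1.2

namespace NiceCycle

variable {Ω : MTrace → ℕ → ℕ → ℕ → Prop} {τ : MTrace} {k : ℕ} {u w : ℕ → ℕ}

theorem mrel_proc (h : NiceCycle Ω τ k u w) {x : ℕ} (hx : x ∈ Icc 1 k) :
    Mrel τ (ev τ (u x)).proc (u x) (w x) := by
  obtain ⟨-, -, -, -, hM, -⟩ := h
  obtain ⟨i, hi⟩ := hM x hx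
  rwa [hi.proc_eq]

theorem omegaE_loc (h : NiceCycle Ω τ k u w) {x : ℕ} (hx : x ∈ Icc 1 k) :
    OmegaE Ω τ (ev τ (w x)).loc (w x) (u (cyc k x)) := by
  obtain ⟨-, -, -, -, -, hO, -⟩ := h
  obtain ⟨j, hj⟩ := hO x hx
  rwa [hj.loc_eq]

theorem injOn_proc (h : NiceCycle Ω τ k u w) :
    InjOn (fun x => (ev τ (u x)).proc) (Icc 1 k) := by
  intro x hx y hy (hxy : (ev τ (u x)).proc = (ev τ (u y)).proc)
  have hMx := h.mrel_proc hx
  have hMy : Mrel τ (ev τ (u x)).proc (u y) (w y) := hxy ▸ h.mrel_proc hy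
  obtain ⟨-, -, -, -, -, -, hM_unique, -⟩ := h
  by_contra hne
  exact hM_unique x hx y hy hne _ hMx hMy

theorem injOn_loc (h : NiceCycle Ω τ k u w) :
    InjOn (fun x => (ev τ (w x)).loc) (Icc 1 k) := by
  intro x hx y hy (hxy : (ev τ (w x)).loc = (ev τ (w y)).loc)
  have hOx := h.omegaE_loc hx
  have hOy : OmegaE Ω τ (ev τ (w x)).loc (w y) (u (cyc k y)) := hxy ▸ h.omegaE_loc hy
  obtain ⟨-, -, -, -, -, -, -, hO_unique⟩ := h
  by_contra hne
  exact hO_unique x hx y hy hne _ hOx hOy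

theorem mapsTo_proc {n m : ℕ} (h : NiceCycle Ω τ k u w) (hR : InRange n m τ) :
    MapsTo (fun x => (ev τ (u x)).proc) (Icc 1 k) (Icc 1 n) := by
  intro x hx
  obtain ⟨h1, h2, -⟩ := hR _ (ev_mem (h.mrel_proc hx).1.1)
  exact ⟨h1, h2⟩

theorem mapsTo_loc {n m : ℕ} (h : NiceCycle Ω τ k u w) (hR : InRange n m τ) :
    MapsTo (fun x => (ev τ (w x)).loc) (Icc 1 k) (Icc 1 m) := by
  intro x hx
  obtain ⟨-, -, h1, h2⟩ := hR _ (ev_mem (h.mrel_proc hx).2.1.1)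
  exact ⟨h1, h2⟩

end NiceCycle

theorem canonicalNiceCycle_of_mrel_of_omegaE {Ω : MTrace → ℕ → ℕ → ℕ → Prop} {τ : MTrace}
    {k : ℕ} {u w : ℕ → ℕ} (hk : 1 ≤ k)
    (hu : ∀ x ∈ Icc 1 k, ∀ y ∈ Icc 1 k, x ≠ y → u x ≠ u y)
    (hw : ∀ x ∈ Icc 1 k, ∀ y ∈ Icc 1 k, x ≠ y → w x ≠ w y)
    (huw : ∀ x ∈ Icc 1 k, ∀ y ∈ Icc 1 k, u x ≠ w y)
    (hM : ∀ x ∈ Icc 1 k, Mrel τ x (u x) (w x))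
    (hO : ∀ x ∈ Icc 1 k, OmegaE Ω τ (cyc k x) (w x) (u (cyc k x))) :
    CanonicalNiceCycle Ω τ k u w := by
  refine ⟨⟨hk, hu, hw, huw, fun x hx => ⟨x, hM x hx⟩, fun x hx => ⟨_, hO x hx⟩, ?_, ?_⟩, hM, hO⟩
  · intro x hx y hy hxy i hix hiy
    have := (hM x hx).proc_eq.symm.trans hix.proc_eq
    have := (hM y hy).proc_eq.symm.trans hiy.proc_eq
    omega
  · intro x hx y hy hxy j hjx hjy
    exact hxy <| injOn_cyc k hx hy <|
      (hO x hx).loc_eq.symm.trans (hjx.loc_eq.trans (hjy.loc_eq.symm.trans (hO y hy).loc_eq))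

theorem nice_cycle_implies_canonical_general
    (n m v k : ℕ) (hv : 1 ≤ v)
    (M : MemSystem n m) (hP : ProcSymmetric M) (hL : LocSymmetric M)
    (Ω : MTrace → ℕ → ℕ → ℕ → Prop) (hS : IsSimple Ω)
    (τ : MTrace) (hτ : τ ∈ M.S v) (hU : Unambiguous τ)
    (u w : ℕ → ℕ) (hcyc : NiceCycle Ω τ k u w) :
    ∃ τ'', τ'' ∈ M.S v ∧ Unambiguous τ'' ∧
      ∃ u'' w'', CanonicalNiceCycle Ω τ'' k u'' w'' := by
  have hR : InRange n m τ := (M.wf v hv τ hτ).1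
  obtain ⟨σp, hσp, hσp_eq⟩ :=
    exists_permOn_comp_eqOn (hcyc.mapsTo_proc hR) hcyc.injOn_proc (mapsTo_id _) (injOn_id _)
  obtain ⟨σl, hσl, hσl_eq⟩ :=
    exists_permOn_comp_eqOn (hcyc.mapsTo_loc hR) hcyc.injOn_loc (mapsTo_cyc k) (injOn_cyc k)
  have hmem : τ.map (MemEvent.relabel σp σl) ∈ M.S v := by
    rw [← renameL_renameP]
    exact hL σl hσl v _ (hP σp hσp v τ hτ)
  have hM : ∀ x ∈ Icc 1 k, Mrel (τ.map (MemEvent.relabel σp σl)) x (u x) (w x) := fun x hx => by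
    simpa only [hσp_eq x hx, id] using (mrel_map_relabel σp.injective _ _ _).2 (hcyc.mrel_proc hx)
  have hO : ∀ x ∈ Icc 1 k,
      OmegaE Ω (τ.map (MemEvent.relabel σp σl)) (cyc k x) (w x) (u (cyc k x)) := fun x hx => by
    simpa only [hσl_eq x hx] using (omegaE_map_relabel hS σl.injective _ _ _).2 (hcyc.omegaE_loc hx)
  obtain ⟨hk, hu, hw, huw, -⟩ := hcyc
  exact ⟨_, hmem, hU.map_relabel σl.injective, u, w,
    canonicalNiceCycle_of_mrel_of_omegaE hk hu hw huw hM hO⟩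

/-- For a processor and location symmetric memory system, a simple
witness Ω, and an unambiguous trace τ of S(n,m,v): if G(Ω)(τ) has a k-nice cycle,
then some unambiguous trace τ'' of S(n,m,v) has a canonical k-nice cycle. -/
theorem nice_cycle_implies_canonical
    (n m v k : ℕ) (hn : 1 ≤ n) (hm : 1 ≤ m) (hv : 1 ≤ v)
    (M : MemSystem n m) (hP : ProcSymmetric M) (hL : LocSymmetric M)
    (Ω : MTrace → ℕ → ℕ → ℕ → Prop) (hΩ : IsWitness Ω) (hS : IsSimple Ω)
    (τ : MTrace) (hτ : τ ∈ M.S v) (hU : Unambiguous τ)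
    (u w : ℕ → ℕ) (hcyc : NiceCycle Ω τ k u w) :
    ∃ τ'', τ'' ∈ M.S v ∧ Unambiguous τ'' ∧
      ∃ u'' w'', CanonicalNiceCycle Ω τ'' k u'' w'' :=
  nice_cycle_implies_canonical_general n m v k hv M hP hL Ω hS τ hτ hU u w hcyc
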